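/- Let N ≥ 2 and G ≥ 1 be integers with G dividing N. Let E be a real inner product space, v : Fin N → E a family of unit vectors with ⟨v x, v y⟩ ≥ 0 for all x, y, c : Fin N → Fin G a cluster assignment each of whose fibers has exactly N/G elements, μ_g = (G/N) · Σ_{x : c x = g} v x the centroid of cluster g, and δ ≥ 0 such that ⟨μ_g, v x⟩ ≤ δ whenever c x ≠ g. Let ṽ : Fin N → E satisfy ṽ x = v x for all x. Then the empirical spectral contrastive loss L_spec(v, ṽ) := −2 · (1/N) · Σ_x ⟨v x, ṽ x⟩ + (1/(N(N−1))) · Σ_{x ≠ y} ⟨v x, v y⟩² satisfies L_spec(v, ṽ) ≤ −2 + (N/(N−1)) · (1/G + (1 − 1/G) · (2δ + (G−1)δ²)). -/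

import Mathlib

/-!
Since augmentations are identical to the originals, `L⁺ = -2`. The features are unit vectors
with pairwise nonnegative inner products, so every `⟪v x, v y⟫` lies in `[0, 1]` and its square
is at most itself. The row sum `∑ y, ⟪v x, v y⟫` is `N / G` times the sum of the inner products
of `v x` with the `G` centroids: the centroid of its own cluster, a mean of unit vectors,
contributes at most `1`, and the other `G - 1` contribute at most `δ` each. This gives
`L⁻ ≤ (N / (N - 1)) (1 + (G - 1) δ) / G`, which is already below the claimed bound.
-/

open scoped RealInnerProductSpace
open Finset

lemma sum_le_add_card_sub_one_mul {κ : Type*} [Fintype κ] [DecidableEq κ] {f : κ → ℝ}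
    (i : κ) {a b : ℝ} (hi : f i ≤ a) (hne : ∀ j ≠ i, f j ≤ b) :
    ∑ j, f j ≤ a + ((Fintype.card κ : ℝ) - 1) * b := by
  rw [← add_sum_erase _ _ (mem_univ i)]
  gcongr
  calc ∑ j ∈ univ.erase i, f j ≤ #(univ.erase i) • b :=
        sum_le_card_nsmul _ _ _ fun j hj => hne j (ne_of_mem_erase hj)
    _ = ((Fintype.card κ : ℝ) - 1) * b := by
        rw [card_erase_of_mem (mem_univ i), card_univ, nsmul_eq_mul,
          Nat.cast_pred (Fintype.card_pos_iff.2 ⟨i⟩)]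

section ClusterGeometry

variable {ι κ E : Type*} [NormedAddCommGroup E] [InnerProductSpace ℝ E]

lemma norm_inv_card_smul_sum_le_one {s : Finset ι} {v : ι → E} (hv : ∀ x ∈ s, ‖v x‖ ≤ 1) :
    ‖(#s : ℝ)⁻¹ • ∑ x ∈ s, v x‖ ≤ 1 := by
  calc ‖(#s : ℝ)⁻¹ • ∑ x ∈ s, v x‖ ≤ (#s : ℝ)⁻¹ * ∑ x ∈ s, ‖v x‖ := by
        rw [norm_smul, Real.norm_of_nonneg (by positivity)]
        gcongr
        exact norm_sum_le _ _
    _ ≤ (#s : ℝ)⁻¹ * #s := by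
        gcongr
        simpa using sum_le_sum hv
    _ ≤ 1 := inv_mul_le_one_of_le₀ le_rfl (Nat.cast_nonneg _)

lemma sum_sq_inner_le_sum_inner [Fintype ι] {w : E} {v : ι → E} (hw : ‖w‖ = 1)
    (hv : ∀ y, ‖v y‖ = 1) (hnn : ∀ y, 0 ≤ ⟪w, v y⟫) (s : Finset ι) :
    ∑ y ∈ s, ⟪w, v y⟫ ^ 2 ≤ ∑ y, ⟪w, v y⟫ :=
  calc ∑ y ∈ s, ⟪w, v y⟫ ^ 2 ≤ ∑ y, ⟪w, v y⟫ ^ 2 :=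
        sum_le_sum_of_subset_of_nonneg (subset_univ s) fun _ _ _ => sq_nonneg _
    _ ≤ ∑ y, ⟪w, v y⟫ := sum_le_sum fun y _ =>
        pow_le_of_le_one (hnn y) (real_inner_le_one_of_norm_eq_one hw (hv y)) two_ne_zero

variable [Fintype ι] [Fintype κ] [DecidableEq κ] {v : ι → E} {c : ι → κ} {μ : κ → E}

lemma sum_inner_eq_inv_mul_sum_inner_centroid {a : ℝ} (ha : a ≠ 0)
    (hμ : ∀ g, μ g = a • ∑ y ∈ univ.filter (fun y => c y = g), v y) (w : E) :
    ∑ y, ⟪w, v y⟫ = a⁻¹ * ∑ g, ⟪μ g, w⟫ := by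
  have hsum : ∑ g, ⟪μ g, w⟫ = a * ∑ y, ⟪w, v y⟫ := by
    simp_rw [hμ, real_inner_smul_left, sum_inner, real_inner_comm w, ← mul_sum, sum_fiberwise]
  rw [hsum, inv_mul_cancel_left₀ ha]

lemma sum_inner_le_of_mixing {m : ℕ} {δ : ℝ} (hv : ∀ y, ‖v y‖ = 1)
    (hcard : ∀ g, #(univ.filter (fun y => c y = g)) = m)
    (hμ : ∀ g, μ g = (m : ℝ)⁻¹ • ∑ y ∈ univ.filter (fun y => c y = g), v y)
    (x : ι) (hmix : ∀ g ≠ c x, ⟪μ g, v x⟫ ≤ δ) :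
    ∑ y, ⟪v x, v y⟫ ≤ m * (1 + ((Fintype.card κ : ℝ) - 1) * δ) := by
  have hm : (m : ℝ) ≠ 0 := by
    rw [Nat.cast_ne_zero, ← hcard (c x)]
    exact (card_pos.2 ⟨x, by simp⟩).ne'
  have hown : ⟪μ (c x), v x⟫ ≤ 1 := by
    refine (real_inner_le_norm _ _).trans ?_
    rw [hv, mul_one, hμ, ← hcard]
    exact norm_inv_card_smul_sum_le_one fun y _ => (hv y).le
  rw [sum_inner_eq_inv_mul_sum_inner_centroid (inv_ne_zero hm) hμ, inv_inv]
  gcongr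
  exact sum_le_add_card_sub_one_mul (c x) hown hmix

end ClusterGeometry

lemma div_le_inv_add_one_sub_inv_mul {G δ : ℝ} (hG : 1 ≤ G) (hδ : 0 ≤ δ) :
    (1 + (G - 1) * δ) / G ≤ 1 / G + (1 - 1 / G) * (2 * δ + (G - 1) * δ ^ 2) := by
  have hG0 : 0 < G := by linarith
  rw [one_sub_div hG0.ne', div_mul_eq_mul_div, ← add_div]
  gcongr
  nlinarith [mul_nonneg (sub_nonneg.2 hG) hδ,
    mul_nonneg (mul_nonneg (sub_nonneg.2 hG) (sub_nonneg.2 hG)) (sq_nonneg δ)]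

/-- Combined conclusion of the proof of Proposition 1: for unit-normalized
cluster-similarity features `v` that are invariant to augmentations (`v' = v`)
and partition into `G` equally sized clusters with inter-cluster mixing `δ`,
the empirical spectral contrastive loss is at most
`−2 + (N/(N−1))(1/G + (1 − 1/G)(2δ + (G−1)δ²))`. -/
theorem spec_loss_upper_bound
    {E : Type*} [NormedAddCommGroup E] [InnerProductSpace ℝ E]
    (N G : ℕ) (hN : 2 ≤ N) (hG : 1 ≤ G) (hdvd : G ∣ N)
    (v : Fin N → E) (hunit : ∀ x, ‖v x‖ = 1)
    (hnn : ∀ x y, 0 ≤ ⟪v x, v y⟫)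
    (c : Fin N → Fin G)
    (hcard : ∀ g : Fin G, (univ.filter (fun x => c x = g)).card = N / G)
    (μ : Fin G → E)
    (hμ : ∀ g : Fin G, μ g = ((G : ℝ) / N) • ∑ x ∈ univ.filter (fun x => c x = g), v x)
    (δ : ℝ) (hδ : 0 ≤ δ)
    (hmix : ∀ (g : Fin G) (x : Fin N), c x ≠ g → ⟪μ g, v x⟫ ≤ δ)
    (v' : Fin N → E) (haug : ∀ x, v' x = v x) :
    -2 * ((1 : ℝ) / N) * ∑ x : Fin N, ⟪v x, v' x⟫ +
        (1 / ((N : ℝ) * ((N : ℝ) - 1))) *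
          ∑ x : Fin N, ∑ y ∈ univ \ {x}, ⟪v x, v y⟫ ^ 2 ≤
      -2 + ((N : ℝ) / ((N : ℝ) - 1)) *
        (1 / (G : ℝ) + (1 - 1 / (G : ℝ)) * (2 * δ + ((G : ℝ) - 1) * δ ^ 2)) := by
  have hN1 : (1 : ℝ) < N := by exact_mod_cast hN
  have hclusterSize : ((N / G : ℕ) : ℝ) = N / G := Nat.cast_div hdvd (by positivity)
  have hpos : -2 * ((1 : ℝ) / N) * ∑ x : Fin N, ⟪v x, v' x⟫ = -2 := by
    simp only [haug, real_inner_self_eq_norm_sq, hunit, one_pow, sum_const, card_univ,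
      Fintype.card_fin, nsmul_one]
    field_simp
  have hrow : ∀ x, ∑ y ∈ univ \ {x}, ⟪v x, v y⟫ ^ 2 ≤ N / G * (1 + (G - 1) * δ) := fun x =>
    calc _ ≤ ∑ y, ⟪v x, v y⟫ := sum_sq_inner_le_sum_inner (hunit x) hunit (hnn x) _
      _ ≤ _ := by
        simpa [hclusterSize] using sum_inner_le_of_mixing hunit hcard
          (fun g => by rw [hμ, hclusterSize, inv_div]) x fun g hg => hmix g x hg.symm
  have hden : 0 < (N : ℝ) - 1 := by linarith
  calc _ ≤ -2 + 1 / ((N : ℝ) * (N - 1)) * ∑ _x : Fin N, (N / G * (1 + (G - 1) * δ) : ℝ) := by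
        rw [hpos]
        gcongr with x
        exact hrow x
    _ = -2 + (N / (N - 1)) * ((1 + (G - 1) * δ) / G) := by
        rw [sum_const, card_univ, Fintype.card_fin, nsmul_eq_mul]
        field_simp
    _ ≤ _ := by
        gcongr
        exact div_le_inv_add_one_sub_inv_mul (by exact_mod_cast hG) hδ
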